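/- Any real quadratic form Q on ℝ¹⁰ vanishing on the set M₋ = {x ∈ S⁹ : G(x) = 0}, where G(x) = |x|⁴ − 4[(x₅x₁₀−x₆x₉+x₇x₈)² + (−x₂x₁₀+x₃x₉−x₄x₈)² + (x₁x₁₀−x₃x₇+x₄x₆)² + (−x₁x₉+x₂x₇−x₄x₅)² + (x₁x₈−x₂x₆+x₃x₅)²], is identically zero. -/

import Mathlib

open MvPolynomial
open Finsupp

/-- `G = (|x|⁴ + F(x))/2` for the isoparametric polynomial of degree 4 with
multiplicities `(2,2)` on `ℝ¹⁰` (coordinates `x 0, …, x 9` standing for `x₁,…,x₁₀`). -/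
def G10 (x : Fin 10 → ℝ) : ℝ :=
  (∑ i, x i ^ 2) ^ 2
    - 4 * ((x 4 * x 9 - x 5 * x 8 + x 6 * x 7) ^ 2
        + (-(x 1 * x 9) + x 2 * x 8 - x 3 * x 7) ^ 2
        + (x 0 * x 9 - x 2 * x 6 + x 3 * x 5) ^ 2
        + (-(x 0 * x 8) + x 1 * x 6 - x 3 * x 4) ^ 2
        + (x 0 * x 7 - x 1 * x 5 + x 2 * x 4) ^ 2)

lemma sum10 {M : Type*} [AddCommMonoid M] (f : Fin 10 → M) :
    ∑ i, f i = f 0 + f 1 + f 2 + f 3 + f 4 + f 5 + f 6 + f 7 + f 8 + f 9 := by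
  rw [Fin.sum_univ_castSucc, Fin.sum_univ_castSucc, Fin.sum_univ_eight]
  rfl

lemma G10_smul (t : ℝ) (y : Fin 10 → ℝ) : G10 (fun i => t * y i) = t ^ 4 * G10 y := by
  simp only [G10, mul_pow, ← Finset.mul_sum]
  ring

noncomputable def mon (a b : Fin 10) : Fin 10 →₀ ℕ := Finsupp.single a 1 + Finsupp.single b 1

lemma toMultiset_mon (a b : Fin 10) : (mon a b).toMultiset = {a, b} := by
  simp [mon, Finsupp.toMultiset_add, Finsupp.toMultiset_single, Multiset.singleton_add]

lemma mon_comm (a b : Fin 10) : mon a b = mon b a := by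
  simp [mon, add_comm]

lemma degree_mon (a b : Fin 10) : (mon a b).degree = 2 := by
  have h := Finsupp.card_toMultiset (mon a b)
  rw [toMultiset_mon] at h
  simpa [Finsupp.degree_apply, Finsupp.sum] using h.symm

lemma exists_mon (d : Fin 10 →₀ ℕ) (hd : d.degree = 2) :
    ∃ a b : Fin 10, a ≤ b ∧ d = mon a b := by
  have h : Multiset.card d.toMultiset = 2 := by
    rw [Finsupp.card_toMultiset]; simpa [Finsupp.degree_apply, Finsupp.sum] using hd
  obtain ⟨a, b, hab⟩ := Multiset.card_eq_two.mp h
  have hd2 : d = mon a b := by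
    have h1 := Finsupp.toMultiset_toFinsupp d
    rw [hab] at h1
    have h2 := Finsupp.toMultiset_toFinsupp (mon a b)
    rw [toMultiset_mon] at h2
    rw [← h1, h2]
  rcases le_total a b with hle | hle
  · exact ⟨a, b, hle, hd2⟩
  · exact ⟨b, a, hle, hd2.trans (mon_comm a b)⟩

lemma mon_inj {a b p q : Fin 10} (hab : a ≤ b) (hpq : p ≤ q)
    (h : mon a b = mon p q) : a = p ∧ b = q := by
  have h' : ({a, b} : Multiset (Fin 10)) = {p, q} := by
    rw [← toMultiset_mon, ← toMultiset_mon, h]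
  rcases Multiset.cons_eq_cons.mp h' with ⟨h1, h2⟩ | ⟨h1, cs, h2, h3⟩
  · exact ⟨h1, by simpa using h2⟩
  · have hcs : cs = 0 := by
      have := congrArg Multiset.card h2
      simpa using this
    subst hcs
    obtain rfl : b = p := by simpa using h2
    obtain rfl : q = a := by simpa using h3
    exact ⟨le_antisymm hab hpq, le_antisymm hpq hab⟩

lemma quad_eq_zero (Q : MvPolynomial (Fin 10) ℝ) (hQ : Q.IsHomogeneous 2)
    (h : ∀ a b : Fin 10, a ≤ b → coeff (mon a b) Q = 0) : Q = 0 := by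
  ext d
  rw [coeff_zero]
  by_cases hd : d.degree = 2
  · obtain ⟨a, b, hab, rfl⟩ := exists_mon d hd
    exact h a b hab
  · exact hQ.coeff_eq_zero hd

set_option maxHeartbeats 1000000 in
lemma quad_expand (Q : MvPolynomial (Fin 10) ℝ) (hQ : Q.IsHomogeneous 2) (x : Fin 10 → ℝ) :
    eval x Q = coeff (mon 0 0) Q * (x 0 * x 0)
        + coeff (mon 0 1) Q * (x 0 * x 1)
        + coeff (mon 0 2) Q * (x 0 * x 2)
        + coeff (mon 0 3) Q * (x 0 * x 3)
        + coeff (mon 0 4) Q * (x 0 * x 4)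
        + coeff (mon 0 5) Q * (x 0 * x 5)
        + coeff (mon 0 6) Q * (x 0 * x 6)
        + coeff (mon 0 7) Q * (x 0 * x 7)
        + coeff (mon 0 8) Q * (x 0 * x 8)
        + coeff (mon 0 9) Q * (x 0 * x 9)
        + coeff (mon 1 1) Q * (x 1 * x 1)
        + coeff (mon 1 2) Q * (x 1 * x 2)
        + coeff (mon 1 3) Q * (x 1 * x 3)
        + coeff (mon 1 4) Q * (x 1 * x 4)
        + coeff (mon 1 5) Q * (x 1 * x 5)
        + coeff (mon 1 6) Q * (x 1 * x 6)
        + coeff (mon 1 7) Q * (x 1 * x 7)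
        + coeff (mon 1 8) Q * (x 1 * x 8)
        + coeff (mon 1 9) Q * (x 1 * x 9)
        + coeff (mon 2 2) Q * (x 2 * x 2)
        + coeff (mon 2 3) Q * (x 2 * x 3)
        + coeff (mon 2 4) Q * (x 2 * x 4)
        + coeff (mon 2 5) Q * (x 2 * x 5)
        + coeff (mon 2 6) Q * (x 2 * x 6)
        + coeff (mon 2 7) Q * (x 2 * x 7)
        + coeff (mon 2 8) Q * (x 2 * x 8)
        + coeff (mon 2 9) Q * (x 2 * x 9)
        + coeff (mon 3 3) Q * (x 3 * x 3)
        + coeff (mon 3 4) Q * (x 3 * x 4)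
        + coeff (mon 3 5) Q * (x 3 * x 5)
        + coeff (mon 3 6) Q * (x 3 * x 6)
        + coeff (mon 3 7) Q * (x 3 * x 7)
        + coeff (mon 3 8) Q * (x 3 * x 8)
        + coeff (mon 3 9) Q * (x 3 * x 9)
        + coeff (mon 4 4) Q * (x 4 * x 4)
        + coeff (mon 4 5) Q * (x 4 * x 5)
        + coeff (mon 4 6) Q * (x 4 * x 6)
        + coeff (mon 4 7) Q * (x 4 * x 7)
        + coeff (mon 4 8) Q * (x 4 * x 8)
        + coeff (mon 4 9) Q * (x 4 * x 9)
        + coeff (mon 5 5) Q * (x 5 * x 5)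
        + coeff (mon 5 6) Q * (x 5 * x 6)
        + coeff (mon 5 7) Q * (x 5 * x 7)
        + coeff (mon 5 8) Q * (x 5 * x 8)
        + coeff (mon 5 9) Q * (x 5 * x 9)
        + coeff (mon 6 6) Q * (x 6 * x 6)
        + coeff (mon 6 7) Q * (x 6 * x 7)
        + coeff (mon 6 8) Q * (x 6 * x 8)
        + coeff (mon 6 9) Q * (x 6 * x 9)
        + coeff (mon 7 7) Q * (x 7 * x 7)
        + coeff (mon 7 8) Q * (x 7 * x 8)
        + coeff (mon 7 9) Q * (x 7 * x 9)
        + coeff (mon 8 8) Q * (x 8 * x 8)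
        + coeff (mon 8 9) Q * (x 8 * x 9)
        + coeff (mon 9 9) Q * (x 9 * x 9) := by
  classical
  have hQ' : Q = ∑ p ∈ (Finset.univ : Finset (Fin 10 × Fin 10)).filter (fun p => p.1 ≤ p.2),
      monomial (mon p.1 p.2) (coeff (mon p.1 p.2) Q) := by
    ext d
    rw [MvPolynomial.coeff_sum]
    by_cases hd : d.degree = 2
    · obtain ⟨a, b, hab, rfl⟩ := exists_mon d hd
      rw [Finset.sum_eq_single_of_mem ((a, b) : Fin 10 × Fin 10)]
      · rw [coeff_monomial, if_pos rfl]
      · simp [hab]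
      · intro p hp hne
        rw [coeff_monomial]
        split_ifs with h
        · exfalso
          have hpq : p.1 ≤ p.2 := by simpa using (Finset.mem_filter.mp hp).2
          obtain ⟨h1, h2⟩ := mon_inj hpq hab h
          exact hne (Prod.ext h1 h2)
        · rfl
    · rw [hQ.coeff_eq_zero hd, Finset.sum_eq_zero]
      intro p hp
      rw [coeff_monomial]
      split_ifs with h
      · exact absurd (h ▸ degree_mon p.1 p.2) hd
      · rfl
  have heval : eval x Q = ∑ a : Fin 10, ∑ b : Fin 10,
      if a ≤ b then coeff (mon a b) Q * (x a * x b) else 0 := by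
    conv_lhs => rw [hQ']
    rw [map_sum, Finset.sum_filter, Fintype.sum_prod_type]
    refine Finset.sum_congr rfl fun a _ => Finset.sum_congr rfl fun b _ => ?_
    split_ifs with hab
    · rw [eval_monomial, mon,
        Finsupp.prod_add_index' (fun i => pow_zero (x i)) (fun i m n => pow_add (x i) m n)]
      simp [Finsupp.prod_single_index]
    · rfl
  rw [heval]
  simp [sum10]
  ring

set_option maxHeartbeats 4000000 in
lemma core (c : Fin 10 → Fin 10 → ℝ)
    (h : ∀ y : Fin 10 → ℝ, G10 y = 0 →
      (c 0 0 * (y 0 * y 0)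
        + c 0 1 * (y 0 * y 1)
        + c 0 2 * (y 0 * y 2)
        + c 0 3 * (y 0 * y 3)
        + c 0 4 * (y 0 * y 4)
        + c 0 5 * (y 0 * y 5)
        + c 0 6 * (y 0 * y 6)
        + c 0 7 * (y 0 * y 7)
        + c 0 8 * (y 0 * y 8)
        + c 0 9 * (y 0 * y 9)
        + c 1 1 * (y 1 * y 1)
        + c 1 2 * (y 1 * y 2)
        + c 1 3 * (y 1 * y 3)
        + c 1 4 * (y 1 * y 4)
        + c 1 5 * (y 1 * y 5)
        + c 1 6 * (y 1 * y 6)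
        + c 1 7 * (y 1 * y 7)
        + c 1 8 * (y 1 * y 8)
        + c 1 9 * (y 1 * y 9)
        + c 2 2 * (y 2 * y 2)
        + c 2 3 * (y 2 * y 3)
        + c 2 4 * (y 2 * y 4)
        + c 2 5 * (y 2 * y 5)
        + c 2 6 * (y 2 * y 6)
        + c 2 7 * (y 2 * y 7)
        + c 2 8 * (y 2 * y 8)
        + c 2 9 * (y 2 * y 9)
        + c 3 3 * (y 3 * y 3)
        + c 3 4 * (y 3 * y 4)
        + c 3 5 * (y 3 * y 5)
        + c 3 6 * (y 3 * y 6)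
        + c 3 7 * (y 3 * y 7)
        + c 3 8 * (y 3 * y 8)
        + c 3 9 * (y 3 * y 9)
        + c 4 4 * (y 4 * y 4)
        + c 4 5 * (y 4 * y 5)
        + c 4 6 * (y 4 * y 6)
        + c 4 7 * (y 4 * y 7)
        + c 4 8 * (y 4 * y 8)
        + c 4 9 * (y 4 * y 9)
        + c 5 5 * (y 5 * y 5)
        + c 5 6 * (y 5 * y 6)
        + c 5 7 * (y 5 * y 7)
        + c 5 8 * (y 5 * y 8)
        + c 5 9 * (y 5 * y 9)
        + c 6 6 * (y 6 * y 6)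
        + c 6 7 * (y 6 * y 7)
        + c 6 8 * (y 6 * y 8)
        + c 6 9 * (y 6 * y 9)
        + c 7 7 * (y 7 * y 7)
        + c 7 8 * (y 7 * y 8)
        + c 7 9 * (y 7 * y 9)
        + c 8 8 * (y 8 * y 8)
        + c 8 9 * (y 8 * y 9)
        + c 9 9 * (y 9 * y 9)) = 0) :
    ∀ a b : Fin 10, a ≤ b → c a b = 0 := by
  have ep0_7 := h (fun i => if i = 0 then 1 else if i = 7 then 1 else 0) (by simp (config := { decide := true }) only [G10, sum10]; norm_num)
  have em0_7 := h (fun i => if i = 0 then 1 else if i = 7 then -1 else 0) (by simp (config := { decide := true }) only [G10, sum10]; norm_num)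
  simp (config := { decide := true }) at ep0_7 em0_7
  have X0_7 : c 0 7 = 0 := by linarith
  have S0_7 : c 0 0 + c 7 7 = 0 := by linarith
  have ep0_8 := h (fun i => if i = 0 then 1 else if i = 8 then 1 else 0) (by simp (config := { decide := true }) only [G10, sum10]; norm_num)
  have em0_8 := h (fun i => if i = 0 then 1 else if i = 8 then -1 else 0) (by simp (config := { decide := true }) only [G10, sum10]; norm_num)
  simp (config := { decide := true }) at ep0_8 em0_8
  have X0_8 : c 0 8 = 0 := by linarith
  have S0_8 : c 0 0 + c 8 8 = 0 := by linarith
  have ep0_9 := h (fun i => if i = 0 then 1 else if i = 9 then 1 else 0) (by simp (config := { decide := true }) only [G10, sum10]; norm_num)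
  have em0_9 := h (fun i => if i = 0 then 1 else if i = 9 then -1 else 0) (by simp (config := { decide := true }) only [G10, sum10]; norm_num)
  simp (config := { decide := true }) at ep0_9 em0_9
  have X0_9 : c 0 9 = 0 := by linarith
  have S0_9 : c 0 0 + c 9 9 = 0 := by linarith
  have ep1_5 := h (fun i => if i = 1 then 1 else if i = 5 then 1 else 0) (by simp (config := { decide := true }) only [G10, sum10]; norm_num)
  have em1_5 := h (fun i => if i = 1 then 1 else if i = 5 then -1 else 0) (by simp (config := { decide := true }) only [G10, sum10]; norm_num)
  simp (config := { decide := true }) at ep1_5 em1_5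
  have X1_5 : c 1 5 = 0 := by linarith
  have S1_5 : c 1 1 + c 5 5 = 0 := by linarith
  have ep1_6 := h (fun i => if i = 1 then 1 else if i = 6 then 1 else 0) (by simp (config := { decide := true }) only [G10, sum10]; norm_num)
  have em1_6 := h (fun i => if i = 1 then 1 else if i = 6 then -1 else 0) (by simp (config := { decide := true }) only [G10, sum10]; norm_num)
  simp (config := { decide := true }) at ep1_6 em1_6
  have X1_6 : c 1 6 = 0 := by linarith
  have S1_6 : c 1 1 + c 6 6 = 0 := by linarith
  have ep1_9 := h (fun i => if i = 1 then 1 else if i = 9 then 1 else 0) (by simp (config := { decide := true }) only [G10, sum10]; norm_num)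
  have em1_9 := h (fun i => if i = 1 then 1 else if i = 9 then -1 else 0) (by simp (config := { decide := true }) only [G10, sum10]; norm_num)
  simp (config := { decide := true }) at ep1_9 em1_9
  have X1_9 : c 1 9 = 0 := by linarith
  have S1_9 : c 1 1 + c 9 9 = 0 := by linarith
  have ep2_4 := h (fun i => if i = 2 then 1 else if i = 4 then 1 else 0) (by simp (config := { decide := true }) only [G10, sum10]; norm_num)
  have em2_4 := h (fun i => if i = 2 then 1 else if i = 4 then -1 else 0) (by simp (config := { decide := true }) only [G10, sum10]; norm_num)
  simp (config := { decide := true }) at ep2_4 em2_4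
  have X2_4 : c 2 4 = 0 := by linarith
  have S2_4 : c 2 2 + c 4 4 = 0 := by linarith
  have ep2_6 := h (fun i => if i = 2 then 1 else if i = 6 then 1 else 0) (by simp (config := { decide := true }) only [G10, sum10]; norm_num)
  have em2_6 := h (fun i => if i = 2 then 1 else if i = 6 then -1 else 0) (by simp (config := { decide := true }) only [G10, sum10]; norm_num)
  simp (config := { decide := true }) at ep2_6 em2_6
  have X2_6 : c 2 6 = 0 := by linarith
  have S2_6 : c 2 2 + c 6 6 = 0 := by linarith
  have ep2_8 := h (fun i => if i = 2 then 1 else if i = 8 then 1 else 0) (by simp (config := { decide := true }) only [G10, sum10]; norm_num)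
  have em2_8 := h (fun i => if i = 2 then 1 else if i = 8 then -1 else 0) (by simp (config := { decide := true }) only [G10, sum10]; norm_num)
  simp (config := { decide := true }) at ep2_8 em2_8
  have X2_8 : c 2 8 = 0 := by linarith
  have S2_8 : c 2 2 + c 8 8 = 0 := by linarith
  have ep3_4 := h (fun i => if i = 3 then 1 else if i = 4 then 1 else 0) (by simp (config := { decide := true }) only [G10, sum10]; norm_num)
  have em3_4 := h (fun i => if i = 3 then 1 else if i = 4 then -1 else 0) (by simp (config := { decide := true }) only [G10, sum10]; norm_num)
  simp (config := { decide := true }) at ep3_4 em3_4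
  have X3_4 : c 3 4 = 0 := by linarith
  have S3_4 : c 3 3 + c 4 4 = 0 := by linarith
  have ep3_5 := h (fun i => if i = 3 then 1 else if i = 5 then 1 else 0) (by simp (config := { decide := true }) only [G10, sum10]; norm_num)
  have em3_5 := h (fun i => if i = 3 then 1 else if i = 5 then -1 else 0) (by simp (config := { decide := true }) only [G10, sum10]; norm_num)
  simp (config := { decide := true }) at ep3_5 em3_5
  have X3_5 : c 3 5 = 0 := by linarith
  have S3_5 : c 3 3 + c 5 5 = 0 := by linarith
  have ep3_7 := h (fun i => if i = 3 then 1 else if i = 7 then 1 else 0) (by simp (config := { decide := true }) only [G10, sum10]; norm_num)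
  have em3_7 := h (fun i => if i = 3 then 1 else if i = 7 then -1 else 0) (by simp (config := { decide := true }) only [G10, sum10]; norm_num)
  simp (config := { decide := true }) at ep3_7 em3_7
  have X3_7 : c 3 7 = 0 := by linarith
  have S3_7 : c 3 3 + c 7 7 = 0 := by linarith
  have ep4_9 := h (fun i => if i = 4 then 1 else if i = 9 then 1 else 0) (by simp (config := { decide := true }) only [G10, sum10]; norm_num)
  have em4_9 := h (fun i => if i = 4 then 1 else if i = 9 then -1 else 0) (by simp (config := { decide := true }) only [G10, sum10]; norm_num)
  simp (config := { decide := true }) at ep4_9 em4_9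
  have X4_9 : c 4 9 = 0 := by linarith
  have S4_9 : c 4 4 + c 9 9 = 0 := by linarith
  have ep5_8 := h (fun i => if i = 5 then 1 else if i = 8 then 1 else 0) (by simp (config := { decide := true }) only [G10, sum10]; norm_num)
  have em5_8 := h (fun i => if i = 5 then 1 else if i = 8 then -1 else 0) (by simp (config := { decide := true }) only [G10, sum10]; norm_num)
  simp (config := { decide := true }) at ep5_8 em5_8
  have X5_8 : c 5 8 = 0 := by linarith
  have S5_8 : c 5 5 + c 8 8 = 0 := by linarith
  have ep6_7 := h (fun i => if i = 6 then 1 else if i = 7 then 1 else 0) (by simp (config := { decide := true }) only [G10, sum10]; norm_num)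
  have em6_7 := h (fun i => if i = 6 then 1 else if i = 7 then -1 else 0) (by simp (config := { decide := true }) only [G10, sum10]; norm_num)
  simp (config := { decide := true }) at ep6_7 em6_7
  have X6_7 : c 6 7 = 0 := by linarith
  have S6_7 : c 6 6 + c 7 7 = 0 := by linarith
  have D0 : c 0 0 = 0 := by linarith [S0_7, S3_7, S3_4, S4_9, S0_9]
  have D7 : c 7 7 = 0 := by linarith [S0_7, S3_7, S3_4, S4_9, S0_9]
  have D3 : c 3 3 = 0 := by linarith [S0_7, S3_7, S3_4, S4_9, S0_9]
  have D4 : c 4 4 = 0 := by linarith [S0_7, S3_7, S3_4, S4_9, S0_9]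
  have D9 : c 9 9 = 0 := by linarith [S0_7, S3_7, S3_4, S4_9, S0_9]
  have D1 : c 1 1 = 0 := by linarith [S1_9, D9]
  have D2 : c 2 2 = 0 := by linarith [S2_4, D4]
  have D5 : c 5 5 = 0 := by linarith [S3_5, D3]
  have D6 : c 6 6 = 0 := by linarith [S2_6, D2]
  have D8 : c 8 8 = 0 := by linarith [S0_8, D0]
  have t0_1 := h (fun i => if i = 0 then 3 else if i = 1 then 4 else if i = 9 then 5 else 0) (by simp (config := { decide := true }) only [G10, sum10]; norm_num)
  simp (config := { decide := true }) at t0_1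
  have X0_1 : c 0 1 = 0 := by linarith [D0, D1, D9, X0_9, X1_9]
  have t0_2 := h (fun i => if i = 0 then 3 else if i = 2 then 4 else if i = 8 then 5 else 0) (by simp (config := { decide := true }) only [G10, sum10]; norm_num)
  simp (config := { decide := true }) at t0_2
  have X0_2 : c 0 2 = 0 := by linarith [D0, D2, D8, X0_8, X2_8]
  have t0_3 := h (fun i => if i = 0 then 3 else if i = 3 then 4 else if i = 7 then 5 else 0) (by simp (config := { decide := true }) only [G10, sum10]; norm_num)
  simp (config := { decide := true }) at t0_3
  have X0_3 : c 0 3 = 0 := by linarith [D0, D3, D7, X0_7, X3_7]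
  have t0_4 := h (fun i => if i = 0 then 3 else if i = 4 then 4 else if i = 9 then 5 else 0) (by simp (config := { decide := true }) only [G10, sum10]; norm_num)
  simp (config := { decide := true }) at t0_4
  have X0_4 : c 0 4 = 0 := by linarith [D0, D4, D9, X0_9, X4_9]
  have t0_5 := h (fun i => if i = 0 then 3 else if i = 5 then 4 else if i = 8 then 5 else 0) (by simp (config := { decide := true }) only [G10, sum10]; norm_num)
  simp (config := { decide := true }) at t0_5
  have X0_5 : c 0 5 = 0 := by linarith [D0, D5, D8, X0_8, X5_8]
  have t0_6 := h (fun i => if i = 0 then 3 else if i = 6 then 4 else if i = 7 then 5 else 0) (by simp (config := { decide := true }) only [G10, sum10]; norm_num)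
  simp (config := { decide := true }) at t0_6
  have X0_6 : c 0 6 = 0 := by linarith [D0, D6, D7, X0_7, X6_7]
  have t1_2 := h (fun i => if i = 1 then 3 else if i = 2 then 4 else if i = 6 then 5 else 0) (by simp (config := { decide := true }) only [G10, sum10]; norm_num)
  simp (config := { decide := true }) at t1_2
  have X1_2 : c 1 2 = 0 := by linarith [D1, D2, D6, X1_6, X2_6]
  have t1_3 := h (fun i => if i = 1 then 3 else if i = 3 then 4 else if i = 5 then 5 else 0) (by simp (config := { decide := true }) only [G10, sum10]; norm_num)
  simp (config := { decide := true }) at t1_3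
  have X1_3 : c 1 3 = 0 := by linarith [D1, D3, D5, X1_5, X3_5]
  have t1_4 := h (fun i => if i = 1 then 3 else if i = 4 then 4 else if i = 9 then 5 else 0) (by simp (config := { decide := true }) only [G10, sum10]; norm_num)
  simp (config := { decide := true }) at t1_4
  have X1_4 : c 1 4 = 0 := by linarith [D1, D4, D9, X1_9, X4_9]
  have t1_7 := h (fun i => if i = 1 then 3 else if i = 6 then 5 else if i = 7 then 4 else 0) (by simp (config := { decide := true }) only [G10, sum10]; norm_num)
  simp (config := { decide := true }) at t1_7
  have X1_7 : c 1 7 = 0 := by linarith [D1, D7, D6, X1_6, X6_7]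
  have t1_8 := h (fun i => if i = 1 then 3 else if i = 5 then 5 else if i = 8 then 4 else 0) (by simp (config := { decide := true }) only [G10, sum10]; norm_num)
  simp (config := { decide := true }) at t1_8
  have X1_8 : c 1 8 = 0 := by linarith [D1, D8, D5, X1_5, X5_8]
  have t2_3 := h (fun i => if i = 2 then 3 else if i = 3 then 4 else if i = 4 then 5 else 0) (by simp (config := { decide := true }) only [G10, sum10]; norm_num)
  simp (config := { decide := true }) at t2_3
  have X2_3 : c 2 3 = 0 := by linarith [D2, D3, D4, X2_4, X3_4]
  have t2_5 := h (fun i => if i = 2 then 3 else if i = 5 then 4 else if i = 8 then 5 else 0) (by simp (config := { decide := true }) only [G10, sum10]; norm_num)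
  simp (config := { decide := true }) at t2_5
  have X2_5 : c 2 5 = 0 := by linarith [D2, D5, D8, X2_8, X5_8]
  have t2_7 := h (fun i => if i = 2 then 3 else if i = 6 then 5 else if i = 7 then 4 else 0) (by simp (config := { decide := true }) only [G10, sum10]; norm_num)
  simp (config := { decide := true }) at t2_7
  have X2_7 : c 2 7 = 0 := by linarith [D2, D7, D6, X2_6, X6_7]
  have t2_9 := h (fun i => if i = 2 then 3 else if i = 4 then 5 else if i = 9 then 4 else 0) (by simp (config := { decide := true }) only [G10, sum10]; norm_num)
  simp (config := { decide := true }) at t2_9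
  have X2_9 : c 2 9 = 0 := by linarith [D2, D9, D4, X2_4, X4_9]
  have t3_6 := h (fun i => if i = 3 then 3 else if i = 6 then 4 else if i = 7 then 5 else 0) (by simp (config := { decide := true }) only [G10, sum10]; norm_num)
  simp (config := { decide := true }) at t3_6
  have X3_6 : c 3 6 = 0 := by linarith [D3, D6, D7, X3_7, X6_7]
  have t3_8 := h (fun i => if i = 3 then 3 else if i = 5 then 5 else if i = 8 then 4 else 0) (by simp (config := { decide := true }) only [G10, sum10]; norm_num)
  simp (config := { decide := true }) at t3_8
  have X3_8 : c 3 8 = 0 := by linarith [D3, D8, D5, X3_5, X5_8]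
  have t3_9 := h (fun i => if i = 3 then 3 else if i = 4 then 5 else if i = 9 then 4 else 0) (by simp (config := { decide := true }) only [G10, sum10]; norm_num)
  simp (config := { decide := true }) at t3_9
  have X3_9 : c 3 9 = 0 := by linarith [D3, D9, D4, X3_4, X4_9]
  have t4_5 := h (fun i => if i = 3 then 5 else if i = 4 then 3 else if i = 5 then 4 else 0) (by simp (config := { decide := true }) only [G10, sum10]; norm_num)
  simp (config := { decide := true }) at t4_5
  have X4_5 : c 4 5 = 0 := by linarith [D4, D5, D3, X3_4, X3_5]
  have t4_6 := h (fun i => if i = 2 then 5 else if i = 4 then 3 else if i = 6 then 4 else 0) (by simp (config := { decide := true }) only [G10, sum10]; norm_num)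
  simp (config := { decide := true }) at t4_6
  have X4_6 : c 4 6 = 0 := by linarith [D4, D6, D2, X2_4, X2_6]
  have t4_7 := h (fun i => if i = 3 then 5 else if i = 4 then 3 else if i = 7 then 4 else 0) (by simp (config := { decide := true }) only [G10, sum10]; norm_num)
  simp (config := { decide := true }) at t4_7
  have X4_7 : c 4 7 = 0 := by linarith [D4, D7, D3, X3_4, X3_7]
  have t4_8 := h (fun i => if i = 2 then 5 else if i = 4 then 3 else if i = 8 then 4 else 0) (by simp (config := { decide := true }) only [G10, sum10]; norm_num)
  simp (config := { decide := true }) at t4_8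
  have X4_8 : c 4 8 = 0 := by linarith [D4, D8, D2, X2_4, X2_8]
  have t5_6 := h (fun i => if i = 1 then 5 else if i = 5 then 3 else if i = 6 then 4 else 0) (by simp (config := { decide := true }) only [G10, sum10]; norm_num)
  simp (config := { decide := true }) at t5_6
  have X5_6 : c 5 6 = 0 := by linarith [D5, D6, D1, X1_5, X1_6]
  have t5_7 := h (fun i => if i = 3 then 5 else if i = 5 then 3 else if i = 7 then 4 else 0) (by simp (config := { decide := true }) only [G10, sum10]; norm_num)
  simp (config := { decide := true }) at t5_7
  have X5_7 : c 5 7 = 0 := by linarith [D5, D7, D3, X3_5, X3_7]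
  have t5_9 := h (fun i => if i = 1 then 5 else if i = 5 then 3 else if i = 9 then 4 else 0) (by simp (config := { decide := true }) only [G10, sum10]; norm_num)
  simp (config := { decide := true }) at t5_9
  have X5_9 : c 5 9 = 0 := by linarith [D5, D9, D1, X1_5, X1_9]
  have t6_8 := h (fun i => if i = 2 then 5 else if i = 6 then 3 else if i = 8 then 4 else 0) (by simp (config := { decide := true }) only [G10, sum10]; norm_num)
  simp (config := { decide := true }) at t6_8
  have X6_8 : c 6 8 = 0 := by linarith [D6, D8, D2, X2_6, X2_8]
  have t6_9 := h (fun i => if i = 1 then 5 else if i = 6 then 3 else if i = 9 then 4 else 0) (by simp (config := { decide := true }) only [G10, sum10]; norm_num)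
  simp (config := { decide := true }) at t6_9
  have X6_9 : c 6 9 = 0 := by linarith [D6, D9, D1, X1_6, X1_9]
  have t7_8 := h (fun i => if i = 0 then 5 else if i = 7 then 3 else if i = 8 then 4 else 0) (by simp (config := { decide := true }) only [G10, sum10]; norm_num)
  simp (config := { decide := true }) at t7_8
  have X7_8 : c 7 8 = 0 := by linarith [D7, D8, D0, X0_7, X0_8]
  have t7_9 := h (fun i => if i = 0 then 5 else if i = 7 then 3 else if i = 9 then 4 else 0) (by simp (config := { decide := true }) only [G10, sum10]; norm_num)
  simp (config := { decide := true }) at t7_9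
  have X7_9 : c 7 9 = 0 := by linarith [D7, D9, D0, X0_7, X0_9]
  have t8_9 := h (fun i => if i = 0 then 5 else if i = 8 then 3 else if i = 9 then 4 else 0) (by simp (config := { decide := true }) only [G10, sum10]; norm_num)
  simp (config := { decide := true }) at t8_9
  have X8_9 : c 8 9 = 0 := by linarith [D8, D9, D0, X0_8, X0_9]
  intro a b hab
  fin_cases a <;> fin_cases b <;> first | assumption | exact absurd hab (by decide)

set_option maxHeartbeats 1000000 in
/-- Any quadratic form on `ℝ¹⁰` vanishing on the focal submanifold
`M₋ = {x ∈ S⁹ : G(x) = 0}` is identically zero. -/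
theorem stmt7 (Q : MvPolynomial (Fin 10) ℝ) (hQ : Q.IsHomogeneous 2)
    (hvan : ∀ x : Fin 10 → ℝ, (∑ i, x i ^ 2 = 1) → G10 x = 0 → eval x Q = 0) :
    Q = 0 := by
  refine quad_eq_zero Q hQ (core (fun a b => coeff (mon a b) Q) ?_)
  intro y hy
  beta_reduce
  by_cases hn : (∑ i, y i ^ 2) = 0
  · have hall : ∀ i, y i = 0 := by
      intro i
      have h1 := (Finset.sum_eq_zero_iff_of_nonneg (fun j _ => sq_nonneg (y j))).mp hn i
        (Finset.mem_univ i)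
      exact pow_eq_zero_iff two_ne_zero |>.mp h1
    simp [hall]
  · have hn' : 0 < ∑ i, y i ^ 2 :=
      (Finset.sum_nonneg fun i _ => sq_nonneg _).lt_of_ne (Ne.symm hn)
    set s : ℝ := Real.sqrt (∑ i, y i ^ 2) with hs
    have hs0 : 0 < s := Real.sqrt_pos.mpr hn'
    have hs2 : s ^ 2 = ∑ i, y i ^ 2 := Real.sq_sqrt hn'.le
    have h1 : (∑ i, (s⁻¹ * y i) ^ 2) = 1 := by
      simp only [mul_pow, ← Finset.mul_sum]
      rw [← hs2]
      field_simp
    have h2 : G10 (fun i => s⁻¹ * y i) = 0 := by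
      rw [G10_smul, hy, mul_zero]
    have h3 := hvan (fun i => s⁻¹ * y i) h1 h2
    rw [quad_expand Q hQ] at h3
    rw [show y 0 = s * (s⁻¹ * y 0) by rw [← mul_assoc, mul_inv_cancel₀ hs0.ne', one_mul], show y 1 = s * (s⁻¹ * y 1) by rw [← mul_assoc, mul_inv_cancel₀ hs0.ne', one_mul], show y 2 = s * (s⁻¹ * y 2) by rw [← mul_assoc, mul_inv_cancel₀ hs0.ne', one_mul], show y 3 = s * (s⁻¹ * y 3) by rw [← mul_assoc, mul_inv_cancel₀ hs0.ne', one_mul], show y 4 = s * (s⁻¹ * y 4) by rw [← mul_assoc, mul_inv_cancel₀ hs0.ne', one_mul], show y 5 = s * (s⁻¹ * y 5) by rw [← mul_assoc, mul_inv_cancel₀ hs0.ne', one_mul], show y 6 = s * (s⁻¹ * y 6) by rw [← mul_assoc, mul_inv_cancel₀ hs0.ne', one_mul], show y 7 = s * (s⁻¹ * y 7) by rw [← mul_assoc, mul_inv_cancel₀ hs0.ne', one_mul], show y 8 = s * (s⁻¹ * y 8) by rw [← mul_assoc, mul_inv_cancel₀ hs0.ne', one_mul], show y 9 = s * (s⁻¹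 * y 9) by rw [← mul_assoc, mul_inv_cancel₀ hs0.ne', one_mul]]
    linear_combination s ^ 2 * h3
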